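/- Let τ > 0, h > 0, and let K : ℝ → ℝ be a nonnegative bounded measurable function supported in (−1,1), symmetric (K(−u)=K(u)), with 2∫₀¹ K(u) du = 1. Let g : [0,τ] × [0,τ] → ℝ be measurable and bounded, with |g(t,r₁) − g(t,r₂)| ≤ L*|r₁ − r₂| for all t, r₁, r₂ ∈ [0,τ], where L* > 0. Then |h ∫₀^τ ∫₀^t ((2/h) K((t−r)/h))² g(t,r) dr dt − 4 (∫₀¹ K(u)² du) (∫₀^τ g(t,t) dt)| ≤ 4h (sup_{t∈[0,τ]} |g(t,t)| + τ L*) ∫₀¹ u K(u)² du. -/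

import Mathlib

/-!
Substituting `r = t - h u` turns `h⁻¹ ∫₀ᵗ k((t - r)/h) g(t, r) dr`, with `k = K²` vanishing on
`[1, ∞)`, into `∫₀¹ k(u) g(t, t - h u) du`, the integrand being cut off where `h u > t`. Where
`h u ≤ t` the Lipschitz condition bounds the error against `g(t, t)` by `L h u`; where `h u > t`
it is bounded by `sup |g(t, t)|`, and after Fubini the set `{t : t < h u}` has measure at most
`h u`. Both error terms are therefore at most a multiple of `h ∫₀¹ u k(u) du`.
-/

open MeasureTheory Set

noncomputable def truncatedShift (f : ℝ → ℝ) (h t u : ℝ) : ℝ :=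
  if h * u ≤ t then f (t - h * u) else 0

lemma measurable_truncatedShift {g : ℝ → ℝ → ℝ} (hg : Measurable (Function.uncurry g)) (h : ℝ) :
    Measurable fun z : ℝ × ℝ => truncatedShift (g z.1) h z.1 z.2 :=
  Measurable.ite (measurableSet_le (measurable_snd.const_mul h) measurable_fst)
    (hg.comp (measurable_fst.prodMk (measurable_fst.sub (measurable_snd.const_mul h))))
    measurable_const

lemma abs_truncatedShift_le {f : ℝ → ℝ} {τ h M t u : ℝ} (hh : 0 < h) (hu : 0 ≤ u)
    (ht : t ≤ τ) (hM0 : 0 ≤ M) (hM : ∀ r ∈ Icc 0 τ, |f r| ≤ M) :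
    |truncatedShift f h t u| ≤ M := by
  unfold truncatedShift
  split_ifs with hut
  · exact hM _ ⟨by linarith, by nlinarith⟩
  · simpa using hM0

lemma abs_truncatedShift_sub_le {f : ℝ → ℝ} {τ h L S t u : ℝ} (hh : 0 < h) (hu : 0 ≤ u)
    (hL : 0 ≤ L) (ht : t ∈ Icc 0 τ) (hS : |f t| ≤ S)
    (hf : ∀ r₁ ∈ Icc 0 τ, ∀ r₂ ∈ Icc 0 τ, |f r₁ - f r₂| ≤ L * |r₁ - r₂|) :
    |truncatedShift f h t u - f t| ≤ L * (h * u) + S * (Iio (h * u)).indicator 1 t := by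
  unfold truncatedShift
  split_ifs with hut
  · have hmem : t - h * u ∈ Icc 0 τ := ⟨by linarith, by nlinarith [ht.2]⟩
    calc |f (t - h * u) - f t| ≤ L * |t - h * u - t| := hf _ hmem _ ht
      _ = L * (h * u) + S * (Iio (h * u)).indicator 1 t := by
        rw [indicator_of_notMem (by simpa using hut)]
        simp [abs_of_nonneg (mul_nonneg hh.le hu)]
  · rw [indicator_of_mem (by simpa using hut)]
    simpa using le_add_of_nonneg_of_le (by positivity) hS

lemma intervalIntegral_rescaled_kernel_eq {k f : ℝ → ℝ} {h t : ℝ} (hh : 0 < h) (ht : 0 ≤ t)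
    (hk : ∀ u, 1 ≤ u → k u = 0) :
    ∫ r in 0..t, h⁻¹ * k ((t - r) / h) * f r = ∫ u in Ioc 0 1, k u * truncatedShift f h t u := by
  have hsubst : ∫ r in 0..t, h⁻¹ * k ((t - r) / h) * f r
      = ∫ u in 0..t / h, k u * f (t - h * u) := by
    have hreflect := intervalIntegral.integral_comp_sub_left (a := 0) (b := t)
      (fun x => h⁻¹ * k (x / h) * f (t - x)) t
    have hscale := intervalIntegral.smul_integral_comp_mul_left (a := 0) (b := t / h)
      (fun x => h⁻¹ * k (x / h) * f (t - x)) h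
    simp only [sub_sub_cancel, sub_self, sub_zero] at hreflect
    simp only [mul_div_cancel_left₀ _ hh.ne', mul_zero, mul_div_cancel₀ _ hh.ne', smul_eq_mul,
      mul_assoc, intervalIntegral.integral_const_mul, mul_inv_cancel_left₀ hh.ne'] at hscale
    rw [hreflect, hscale]
    simp only [mul_assoc, intervalIntegral.integral_const_mul]
  rw [hsubst, intervalIntegral.integral_of_le (div_nonneg ht hh.le),
    ← integral_indicator measurableSet_Ioc, ← integral_indicator measurableSet_Ioc]
  congr 1
  ext u
  by_cases hu1 : 1 ≤ u
  · simp [indicator_apply, hk u hu1]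
  · have hdiv : u ≤ t / h ↔ h * u ≤ t := le_div_iff₀' hh
    simp only [indicator_apply, mem_Ioc, truncatedShift, hdiv]
    grind

lemma intervalIntegral_rescaled_kernel_eq_setIntegral_prod {k : ℝ → ℝ} {g : ℝ → ℝ → ℝ} {τ h : ℝ}
    (hτ : 0 ≤ τ) (hh : 0 < h) (hk : ∀ u, 1 ≤ u → k u = 0)
    (hint : IntegrableOn (fun z : ℝ × ℝ => k z.2 * truncatedShift (g z.1) h z.1 z.2)
      (Ioc 0 τ ×ˢ Ioc 0 1)) :
    ∫ t in 0..τ, ∫ r in 0..t, h⁻¹ * k ((t - r) / h) * g t r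
      = ∫ z in Ioc 0 τ ×ˢ Ioc 0 1, k z.2 * truncatedShift (g z.1) h z.1 z.2 := by
  rw [intervalIntegral.integral_of_le hτ, Measure.volume_eq_prod, setIntegral_prod _ hint]
  exact setIntegral_congr_fun measurableSet_Ioc fun t ht =>
    intervalIntegral_rescaled_kernel_eq hh ht.1.le hk

lemma integrableOn_of_abs_le {α : Type*} [MeasurableSpace α] {μ : Measure α} {s : Set α}
    {f : α → ℝ} {C : ℝ} (hs : μ s ≠ ⊤) (hsm : MeasurableSet s) (hf : Measurable f)
    (hb : ∀ x ∈ s, |f x| ≤ C) : IntegrableOn f s μ :=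
  Measure.integrableOn_of_bounded hs hf.aestronglyMeasurable
    ((ae_restrict_mem hsm).mono fun x hx => hb x hx)

lemma integrableOn_Ioc_prod_Ioc_of_abs_le {f : ℝ × ℝ → ℝ} {a b c d C : ℝ} (hf : Measurable f)
    (hb : ∀ z ∈ Ioc a b ×ˢ Ioc c d, |f z| ≤ C) : IntegrableOn f (Ioc a b ×ˢ Ioc c d) :=
  integrableOn_of_abs_le
    ((Metric.isBounded_Ioc a b).prod (Metric.isBounded_Ioc c d)).measure_lt_top.ne
    (measurableSet_Ioc.prod measurableSet_Ioc) hf hb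

lemma setIntegral_Ioc_indicator_Iio_le (τ : ℝ) {c : ℝ} (hc : 0 ≤ c) :
    ∫ t in Ioc 0 τ, (Iio c).indicator 1 t ≤ c := by
  rw [integral_indicator_one measurableSet_Iio, measureReal_restrict_apply measurableSet_Iio]
  calc volume.real (Iio c ∩ Ioc 0 τ) ≤ volume.real (Ioo 0 c) :=
        measureReal_mono (fun t ht => ⟨ht.2.1, ht.1⟩) measure_Ioo_lt_top.ne
    _ = c := by rw [Real.volume_real_Ioo_of_le hc, sub_zero]

noncomputable def shiftErrorBound (k : ℝ → ℝ) (h L S : ℝ) (z : ℝ × ℝ) : ℝ :=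
  k z.2 * (L * (h * z.2) + S * (Iio (h * z.2)).indicator 1 z.1)

section shiftErrorBound

variable {k : ℝ → ℝ} {τ h L S C : ℝ}

lemma shiftErrorBound_nonneg (hk : ∀ u, 0 ≤ k u) (hh : 0 ≤ h) (hL : 0 ≤ L) (hS : 0 ≤ S)
    {z : ℝ × ℝ} (hz : 0 ≤ z.2) : 0 ≤ shiftErrorBound k h L S z :=
  mul_nonneg (hk _) (add_nonneg (by positivity)
    (mul_nonneg hS (indicator_nonneg (fun _ _ => zero_le_one) _)))

lemma measurable_shiftErrorBound (hk : Measurable k) : Measurable (shiftErrorBound k h L S) := by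
  have hset : MeasurableSet {z : ℝ × ℝ | z.1 < h * z.2} :=
    measurableSet_lt measurable_fst (measurable_snd.const_mul h)
  exact (hk.comp measurable_snd).mul (((measurable_snd.const_mul h).const_mul L).add
    ((measurable_const (a := (1 : ℝ))).indicator hset |>.const_mul S))

lemma integrableOn_shiftErrorBound (hk_meas : Measurable k) (hk_nonneg : ∀ u, 0 ≤ k u)
    (hk_le : ∀ u, k u ≤ C) (hh : 0 < h) (hL : 0 ≤ L) (hS : 0 ≤ S) :
    IntegrableOn (shiftErrorBound k h L S) (Ioc 0 τ ×ˢ Ioc 0 1) := by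
  refine integrableOn_Ioc_prod_Ioc_of_abs_le (measurable_shiftErrorBound hk_meas)
    (C := C * (L * h + S)) fun z ⟨_, hu0, hu1⟩ => ?_
  rw [abs_of_nonneg (shiftErrorBound_nonneg hk_nonneg hh.le hL hS hu0.le)]
  have hind : (Iio (h * z.2)).indicator (1 : ℝ → ℝ) z.1 ≤ 1 :=
    indicator_apply_le' (fun _ => le_rfl) fun _ => zero_le_one
  refine mul_le_mul_of_nonneg (hk_le _) ?_ (hk_nonneg _) (by positivity)
  gcongr
  · exact mul_le_of_le_one_right hh.le hu1
  · exact mul_le_of_le_one_right hS hind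

lemma setIntegral_shiftErrorBound_le (hτ : 0 ≤ τ) (hh : 0 < h) (hS : 0 ≤ S) {u : ℝ}
    (hk : 0 ≤ k u) (hu : 0 ≤ u) :
    ∫ t in Ioc 0 τ, shiftErrorBound k h L S (t, u) ≤ h * (S + τ * L) * (u * k u) := by
  have hind : IntegrableOn ((Iio (h * u)).indicator (1 : ℝ → ℝ)) (Ioc 0 τ) :=
    (integrableOn_const measure_Ioc_lt_top.ne).indicator measurableSet_Iio
  simp only [shiftErrorBound]
  rw [integral_const_mul, integral_add (integrable_const _) (hind.const_mul S), setIntegral_const,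
    integral_const_mul, Real.volume_real_Ioc_of_le hτ, sub_zero, smul_eq_mul]
  have := setIntegral_Ioc_indicator_Iio_le τ (mul_nonneg hh.le hu)
  calc k u * (τ * (L * (h * u)) + S * ∫ t in Ioc 0 τ, (Iio (h * u)).indicator 1 t)
      ≤ k u * (τ * (L * (h * u)) + S * (h * u)) := by gcongr
    _ = h * (S + τ * L) * (u * k u) := by ring

lemma setIntegral_prod_shiftErrorBound_le (hτ : 0 ≤ τ) (hh : 0 < h) (hL : 0 ≤ L) (hS : 0 ≤ S)
    (hk_meas : Measurable k) (hk_nonneg : ∀ u, 0 ≤ k u) (hk_le : ∀ u, k u ≤ C) :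
    ∫ z in Ioc 0 τ ×ˢ Ioc 0 1, shiftErrorBound k h L S z
      ≤ h * (S + τ * L) * ∫ u in 0..1, u * k u := by
  have hE := integrableOn_shiftErrorBound (τ := τ) hk_meas hk_nonneg hk_le hh hL hS
  have hmoment : IntegrableOn (fun u => u * k u) (Ioc 0 1) := by
    refine integrableOn_of_abs_le measure_Ioc_lt_top.ne measurableSet_Ioc
      (measurable_id.mul hk_meas) (C := C) fun u hu => ?_
    rw [abs_of_nonneg (mul_nonneg hu.1.le (hk_nonneg u))]
    nlinarith [hu.1, hu.2, hk_le u, hk_nonneg u]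
  rw [Measure.volume_eq_prod, ← setIntegral_prod_swap,
    intervalIntegral.integral_of_le zero_le_one, ← integral_const_mul]
  refine (setIntegral_prod (fun z => shiftErrorBound k h L S z.swap) hE.swap).trans_le
    (integral_mono_of_nonneg ?_ (hmoment.const_mul _) ?_)
  · filter_upwards [ae_restrict_mem measurableSet_Ioc] with u hu
    exact setIntegral_nonneg measurableSet_Ioc fun t _ =>
      shiftErrorBound_nonneg hk_nonneg hh.le hL hS (z := (t, u)) hu.1.le
  · filter_upwards [ae_restrict_mem measurableSet_Ioc] with u hu
    exact setIntegral_shiftErrorBound_le hτ hh hS (hk_nonneg u) hu.1.le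

end shiftErrorBound

theorem abs_integral_rescaled_kernel_sub_le {k : ℝ → ℝ} {g : ℝ → ℝ → ℝ} {τ h L C M S : ℝ}
    (hτ : 0 ≤ τ) (hh : 0 < h) (hL : 0 ≤ L) (hk_meas : Measurable k) (hk_nonneg : ∀ u, 0 ≤ k u)
    (hk_le : ∀ u, k u ≤ C) (hk_supp : ∀ u, 1 ≤ u → k u = 0)
    (hg_meas : Measurable (Function.uncurry g))
    (hg_bdd : ∀ t ∈ Icc 0 τ, ∀ r ∈ Icc 0 τ, |g t r| ≤ M) (hS : ∀ t ∈ Icc 0 τ, |g t t| ≤ S)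
    (hg_lip : ∀ t ∈ Icc 0 τ, ∀ r₁ ∈ Icc 0 τ, ∀ r₂ ∈ Icc 0 τ, |g t r₁ - g t r₂| ≤ L * |r₁ - r₂|) :
    |(∫ t in 0..τ, ∫ r in 0..t, h⁻¹ * k ((t - r) / h) * g t r)
        - (∫ u in 0..1, k u) * ∫ t in 0..τ, g t t|
      ≤ h * (S + τ * L) * ∫ u in 0..1, u * k u := by
  have h0 : (0 : ℝ) ∈ Icc 0 τ := ⟨le_rfl, hτ⟩
  have hM0 : 0 ≤ M := (abs_nonneg _).trans (hg_bdd 0 h0 0 h0)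
  have hS0 : 0 ≤ S := (abs_nonneg _).trans (hS 0 h0)
  have hk_snd : Measurable fun z : ℝ × ℝ => k z.2 := hk_meas.comp measurable_snd
  set T : ℝ × ℝ → ℝ := fun z => k z.2 * truncatedShift (g z.1) h z.1 z.2
  set D : ℝ × ℝ → ℝ := fun z => k z.2 * g z.1 z.1
  have hT : IntegrableOn T (Ioc 0 τ ×ˢ Ioc 0 1) := by
    refine integrableOn_Ioc_prod_Ioc_of_abs_le (hk_snd.mul (measurable_truncatedShift hg_meas h))
      (C := C * M) fun z ⟨⟨ht0, htτ⟩, hu0, _⟩ => ?_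
    rw [abs_mul, abs_of_nonneg (hk_nonneg _)]
    exact mul_le_mul_of_nonneg (hk_le _)
      (abs_truncatedShift_le hh hu0.le htτ hM0 (hg_bdd _ ⟨ht0.le, htτ⟩)) (hk_nonneg _) hM0
  have hD : IntegrableOn D (Ioc 0 τ ×ˢ Ioc 0 1) := by
    refine integrableOn_Ioc_prod_Ioc_of_abs_le
      (hk_snd.mul (hg_meas.comp (measurable_fst.prodMk measurable_fst))) (C := C * M)
      fun z ⟨⟨ht0, htτ⟩, _⟩ => ?_
    rw [abs_mul, abs_of_nonneg (hk_nonneg _)]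
    exact mul_le_mul_of_nonneg (hk_le _) (hg_bdd _ ⟨ht0.le, htτ⟩ _ ⟨ht0.le, htτ⟩) (hk_nonneg _) hM0
  have hrhs : (∫ u in 0..1, k u) * ∫ t in 0..τ, g t t = ∫ z in Ioc 0 τ ×ˢ Ioc 0 1, D z := by
    rw [intervalIntegral.integral_of_le hτ, intervalIntegral.integral_of_le zero_le_one, mul_comm,
      Measure.volume_eq_prod, ← Measure.prod_restrict, ← integral_prod_mul]
    simp only [D, mul_comm]
  have hpt : ∀ z ∈ Ioc 0 τ ×ˢ Ioc 0 1, ‖T z - D z‖ ≤ shiftErrorBound k h L S z := by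
    rintro z ⟨⟨ht0, htτ⟩, hu0, _⟩
    have ht : z.1 ∈ Icc 0 τ := ⟨ht0.le, htτ⟩
    rw [Real.norm_eq_abs, ← mul_sub, abs_mul, abs_of_nonneg (hk_nonneg _)]
    exact mul_le_mul_of_nonneg_left
      (abs_truncatedShift_sub_le hh hu0.le hL ht (hS _ ht) (hg_lip _ ht)) (hk_nonneg _)
  rw [intervalIntegral_rescaled_kernel_eq_setIntegral_prod hτ hh hk_supp hT, hrhs,
    ← integral_sub hT hD]
  calc ‖∫ z in Ioc 0 τ ×ˢ Ioc 0 1, T z - D z‖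
      ≤ ∫ z in Ioc 0 τ ×ˢ Ioc 0 1, shiftErrorBound k h L S z :=
        norm_integral_le_of_norm_le (integrableOn_shiftErrorBound hk_meas hk_nonneg hk_le hh hL hS0)
          ((ae_restrict_mem (measurableSet_Ioc.prod measurableSet_Ioc)).mono hpt)
    _ ≤ h * (S + τ * L) * ∫ u in 0..1, u * k u :=
        setIntegral_prod_shiftErrorBound_le hτ hh hL hS0 hk_meas hk_nonneg hk_le

theorem kernel_squared_bias_bound_general
    (τ h L : ℝ) (hτ : 0 < τ) (hh : 0 < h) (hL : 0 < L)
    (K : ℝ → ℝ) (hKmeas : Measurable K) (hKnonneg : ∀ u, 0 ≤ K u)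
    (hKbdd : ∃ B, ∀ u, K u ≤ B)
    (hKsupp : ∀ u, u ∉ Set.Ioo (-1 : ℝ) 1 → K u = 0)
    (g : ℝ → ℝ → ℝ) (hgmeas : Measurable (Function.uncurry g))
    (hgbdd : ∃ M, ∀ t ∈ Icc (0:ℝ) τ, ∀ r ∈ Icc (0:ℝ) τ, |g t r| ≤ M)
    (hgLip : ∀ t ∈ Icc (0:ℝ) τ, ∀ r₁ ∈ Icc (0:ℝ) τ, ∀ r₂ ∈ Icc (0:ℝ) τ,
      |g t r₁ - g t r₂| ≤ L * |r₁ - r₂|) :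
    |h * (∫ t in (0:ℝ)..τ, ∫ r in (0:ℝ)..t, ((2 / h) * K ((t - r) / h)) ^ 2 * g t r)
        - 4 * (∫ u in (0:ℝ)..1, (K u) ^ 2) * ∫ t in (0:ℝ)..τ, g t t|
      ≤ 4 * h * ((⨆ t ∈ Icc (0:ℝ) τ, |g t t|) + τ * L) *
          ∫ u in (0:ℝ)..1, u * (K u) ^ 2 := by
  obtain ⟨B, hB⟩ := hKbdd
  obtain ⟨M, hM⟩ := hgbdd
  have hsup : ∀ t ∈ Icc (0:ℝ) τ, |g t t| ≤ ⨆ t ∈ Icc (0:ℝ) τ, |g t t| :=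
    le_ciSup₂ (f := fun t (_ : t ∈ Icc (0:ℝ) τ) => |g t t|) ⟨M, by
      simp only [mem_upperBounds, mem_iUnion, mem_range]
      rintro _ ⟨t, ht, rfl⟩
      exact hM t ht t ht⟩
  have hbound := abs_integral_rescaled_kernel_sub_le (k := fun u => K u ^ 2) hτ.le hh hL.le
    (hKmeas.pow_const 2) (fun u => sq_nonneg _) (fun u => pow_le_pow_left₀ (hKnonneg u) (hB u) 2)
    (fun u hu => by simp [hKsupp u fun h => hu.not_gt h.2]) hgmeas hM hsup hgLip
  have hrescale : h * (∫ t in (0:ℝ)..τ, ∫ r in (0:ℝ)..t, ((2 / h) * K ((t - r) / h)) ^ 2 * g t r)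
      = 4 * ∫ t in (0:ℝ)..τ, ∫ r in (0:ℝ)..t, h⁻¹ * K ((t - r) / h) ^ 2 * g t r := by
    have hpt : ∀ x y : ℝ, ((2 / h) * x) ^ 2 * y = 4 / h * (h⁻¹ * x ^ 2 * y) := fun x y => by
      field_simp
      ring
    simp_rw [hpt, intervalIntegral.integral_const_mul]
    field_simp
  rw [hrescale, mul_assoc, ← mul_sub, abs_mul, abs_of_pos four_pos, mul_assoc 4, mul_assoc 4]
  exact mul_le_mul_of_nonneg_left hbound four_pos.le

/-- Kernel-squared approximation bound underlying the asymptotic variance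
computation: with `K_h(x) = (2/h) K(x/h)`, the quantity
`h ∫∫ K_h(t−r)² g(t,r) dr dt` converges at rate `h` to
`4 ∫₀¹ K(u)² du` times the diagonal integral of `g`. -/
theorem kernel_squared_bias_bound
    (τ h L : ℝ) (hτ : 0 < τ) (hh : 0 < h) (hL : 0 < L)
    (K : ℝ → ℝ) (hKmeas : Measurable K) (hKnonneg : ∀ u, 0 ≤ K u)
    (hKbdd : ∃ B, ∀ u, K u ≤ B)
    (hKsupp : ∀ u, u ∉ Set.Ioo (-1 : ℝ) 1 → K u = 0)
    (hKsymm : ∀ u, K (-u) = K u)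
    (hKint : 2 * ∫ u in (0:ℝ)..1, K u = 1)
    (g : ℝ → ℝ → ℝ) (hgmeas : Measurable (Function.uncurry g))
    (hgbdd : ∃ M, ∀ t ∈ Icc (0:ℝ) τ, ∀ r ∈ Icc (0:ℝ) τ, |g t r| ≤ M)
    (hgLip : ∀ t ∈ Icc (0:ℝ) τ, ∀ r₁ ∈ Icc (0:ℝ) τ, ∀ r₂ ∈ Icc (0:ℝ) τ,
      |g t r₁ - g t r₂| ≤ L * |r₁ - r₂|) :
    |h * (∫ t in (0:ℝ)..τ, ∫ r in (0:ℝ)..t, ((2 / h) * K ((t - r) / h)) ^ 2 * g t r)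
        - 4 * (∫ u in (0:ℝ)..1, (K u) ^ 2) * ∫ t in (0:ℝ)..τ, g t t|
      ≤ 4 * h * ((⨆ t ∈ Icc (0:ℝ) τ, |g t t|) + τ * L) *
          ∫ u in (0:ℝ)..1, u * (K u) ^ 2 :=
  kernel_squared_bias_bound_general τ h L hτ hh hL K hKmeas hKnonneg hKbdd hKsupp g hgmeas hgbdd
    hgLip
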